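/- Let Z be a (G,H)-equivalence with Haar systems, with C_c(Z) equipped with the left C_c(G)-valued inner product ⟨φ,ψ⟩_G(γ) = ∫_H φ(γ·w·η) \overline{ψ(w·η)} dβ^{s(w)}(η) and the right C_c(H)-valued inner product ⟨φ,ψ⟩_H. Then the compatibility (imprimitivity) condition holds: ⟨φ,ψ⟩_G · χ = φ · ⟨ψ,χ⟩_H for all φ, ψ, χ ∈ C_c(Z). -/

import Mathlib

open MeasureTheory Topology

/-- A (topological) groupoid: a space `G` with range and source maps `r s : G → G`
(whose common image is the unit space), a partially defined multiplication and an
inversion, all continuous. -/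
structure TopGpd (G : Type*) [TopologicalSpace G] where
  r : G → G
  s : G → G
  mul : (x y : G) → s x = r y → G
  inv : G → G
  r_r : ∀ x, r (r x) = r x
  s_r : ∀ x, s (r x) = r x
  r_s : ∀ x, r (s x) = s x
  s_s : ∀ x, s (s x) = s x
  r_mul : ∀ x y h, r (mul x y h) = r x
  s_mul : ∀ x y h, s (mul x y h) = s y
  unit_mul : ∀ x (h : s (r x) = r x), mul (r x) x h = x
  mul_unit : ∀ x (h : s x = r (s x)), mul x (s x) h = x
  mul_assoc : ∀ x y z (h₁ : s x = r y) (h₂ : s y = r z)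
      (h₃ : s (mul x y h₁) = r z) (h₄ : s x = r (mul y z h₂)),
      mul (mul x y h₁) z h₃ = mul x (mul y z h₂) h₄
  r_inv : ∀ x, r (inv x) = s x
  s_inv : ∀ x, s (inv x) = r x
  inv_mul : ∀ x (h : s (inv x) = r x), mul (inv x) x h = s x
  mul_inv : ∀ x (h : s x = r (inv x)), mul x (inv x) h = r x
  cont_r : Continuous r
  cont_s : Continuous s
  cont_inv : Continuous inv
  cont_mul : Continuous fun p : {p : G × G // s p.1 = r p.2} => mul p.1.1 p.1.2 p.2

/-- A `(G,H)`-equivalence: a locally compact space `Z` with commuting free and proper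
left `G`- and right `H`-actions whose moment maps `ρ` and `σ` are continuous, open,
and induce bijections `Z/H ≅ G⁰` and `G\Z ≅ H⁰`. -/
structure GpdEquiv {G H : Type*} [TopologicalSpace G] [TopologicalSpace H]
    (𝒢 : TopGpd G) (ℋ : TopGpd H) (Z : Type*) [TopologicalSpace Z] where
  ρ : Z → G
  σ : Z → H
  ρ_unit : ∀ z, 𝒢.r (ρ z) = ρ z
  σ_unit : ∀ z, ℋ.r (σ z) = σ z
  ρ_cont : Continuous ρ
  σ_cont : Continuous σ
  ρ_open : IsOpenMap ρ
  σ_open : IsOpenMap σ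
  lact : (γ : G) → (z : Z) → 𝒢.s γ = ρ z → Z
  ract : (z : Z) → (η : H) → σ z = ℋ.r η → Z
  ρ_lact : ∀ γ z h, ρ (lact γ z h) = 𝒢.r γ
  σ_lact : ∀ γ z h, σ (lact γ z h) = σ z
  ρ_ract : ∀ z η h, ρ (ract z η h) = ρ z
  σ_ract : ∀ z η h, σ (ract z η h) = ℋ.s η
  lact_unit : ∀ z (h : 𝒢.s (ρ z) = ρ z), lact (ρ z) z h = z
  ract_unit : ∀ z (h : σ z = ℋ.r (σ z)), ract z (σ z) h = z
  lact_mul : ∀ γ γ' z (h : 𝒢.s γ = 𝒢.r γ') (h' : 𝒢.s γ' = ρ z)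
      (h'' : 𝒢.s (𝒢.mul γ γ' h) = ρ z) (h''' : 𝒢.s γ = ρ (lact γ' z h')),
      lact (𝒢.mul γ γ' h) z h'' = lact γ (lact γ' z h') h'''
  ract_mul : ∀ z η η' (h : σ z = ℋ.r η) (h' : ℋ.s η = ℋ.r η')
      (h'' : σ z = ℋ.r (ℋ.mul η η' h')) (h''' : σ (ract z η h) = ℋ.r η'),
      ract z (ℋ.mul η η' h') h'' = ract (ract z η h) η' h'''
  act_comm : ∀ γ z η (h₁ : 𝒢.s γ = ρ z) (h₂ : σ z = ℋ.r η)
      (h₃ : σ (lact γ z h₁) = ℋ.r η) (h₄ : 𝒢.s γ = ρ (ract z η h₂)),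
      ract (lact γ z h₁) η h₃ = lact γ (ract z η h₂) h₄
  lact_free : ∀ γ z h, lact γ z h = z → γ = ρ z
  ract_free : ∀ z η h, ract z η h = z → η = σ z
  lact_cont : Continuous fun p : {p : G × Z // 𝒢.s p.1 = ρ p.2} =>
      lact p.1.1 p.1.2 p.2
  ract_cont : Continuous fun p : {p : Z × H // σ p.1 = ℋ.r p.2} =>
      ract p.1.1 p.1.2 p.2
  lact_proper : IsProperMap fun p : {p : G × Z // 𝒢.s p.1 = ρ p.2} =>
      (lact p.1.1 p.1.2 p.2, p.1.2)
  ract_proper : IsProperMap fun p : {p : Z × H // σ p.1 = ℋ.r p.2} =>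
      (ract p.1.1 p.1.2 p.2, p.1.1)
  ρ_surj : ∀ u, 𝒢.r u = u → ∃ z, ρ z = u
  σ_surj : ∀ v, ℋ.r v = v → ∃ z, σ z = v
  ρ_orbit : ∀ y z, ρ y = ρ z → ∃ η h, ract z η h = y
  σ_orbit : ∀ y z, σ y = σ z → ∃ γ h, lact γ z h = y

/-!
Both sides are iterated integrals, over `λ^{ρ(z)} × β^{σ(z)}`, of the same function
`(γ, η) ↦ φ(z·η) · conj ψ(γ⁻¹·z·η) · χ(γ⁻¹·z)`: on the left after writing `z = γ·(γ⁻¹·z)`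
and commuting the two actions, on the right after writing `z = (z·η)·η⁻¹`. This function is
continuous on the closed set `{r γ = ρ(z)} × {r η = σ(z)}` carrying the product measure and,
by properness of the actions, vanishes there off a compact set, so Fubini's theorem applies.
-/

theorem MeasureTheory.integrable_of_continuousOn_of_ae_mem {X E : Type*} [TopologicalSpace X]
    [T2Space X] [MeasurableSpace X] [OpensMeasurableSpace X] [NormedAddCommGroup E]
    {μ : Measure X} [IsFiniteMeasureOnCompacts μ] {f : X → E} {S K : Set X}
    (hS : IsClosed S) (hμS : ∀ᵐ x ∂μ, x ∈ S) (hK : IsCompact K) (hf : ContinuousOn f S)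
    (hfK : ∀ x ∈ S, f x ≠ 0 → x ∈ K) : Integrable f μ := by
  have hSK : IsCompact (S ∩ K) := hK.inter_left hS
  refine ((hf.mono Set.inter_subset_left).integrableOn_compact hSK)
    |>.integrable_of_ae_notMem_eq_zero ?_
  filter_upwards [hμS] with x hxS hxSK
  by_contra hfx
  exact hxSK ⟨hxS, hfK x hxS hfx⟩

namespace GpdEquiv

variable {G H Z : Type*} [TopologicalSpace G] [TopologicalSpace H] [TopologicalSpace Z]
  {𝒢 : TopGpd G} {ℋ : TopGpd H} (E : GpdEquiv 𝒢 ℋ Z)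

theorem isCompact_setOf_lact_mem {K L : Set Z} (hK : IsCompact K) (hL : IsCompact L) :
    IsCompact {γ | ∃ w ∈ L, ∃ h : 𝒢.s γ = E.ρ w, E.lact γ w h ∈ K} := by
  convert (E.lact_proper.isCompact_preimage (hK.prod hL)).image
    (continuous_fst.comp continuous_subtype_val) using 1
  ext γ
  constructor
  · rintro ⟨w, hwL, h, hmem⟩
    exact ⟨⟨(γ, w), h⟩, ⟨hmem, hwL⟩, rfl⟩
  · rintro ⟨⟨⟨γ, w⟩, h⟩, ⟨hmem, hwL⟩, rfl⟩
    exact ⟨w, hwL, h, hmem⟩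

theorem isCompact_setOf_ract_mem {K L : Set Z} (hK : IsCompact K) (hL : IsCompact L) :
    IsCompact {η | ∃ w ∈ L, ∃ h : E.σ w = ℋ.r η, E.ract w η h ∈ K} := by
  convert (E.ract_proper.isCompact_preimage (hK.prod hL)).image
    (continuous_snd.comp continuous_subtype_val) using 1
  ext η
  constructor
  · rintro ⟨w, hwL, h, hmem⟩
    exact ⟨⟨(w, η), h⟩, ⟨hmem, hwL⟩, rfl⟩
  · rintro ⟨⟨⟨w, η⟩, h⟩, ⟨hmem, hwL⟩, rfl⟩
    exact ⟨w, hwL, h, hmem⟩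

def IsTotalLAct (aL : G → Z → Z) : Prop :=
  ∀ γ z (h : 𝒢.s γ = E.ρ z), aL γ z = E.lact γ z h

def IsTotalRAct (aR : Z → H → Z) : Prop :=
  ∀ z η (h : E.σ z = ℋ.r η), aR z η = E.ract z η h

variable {E} {aL : G → Z → Z} {aR : Z → H → Z}

theorem ρ_aL (haL : E.IsTotalLAct aL) {γ : G} {z : Z} (h : 𝒢.s γ = E.ρ z) :
    E.ρ (aL γ z) = 𝒢.r γ := by
  rw [haL γ z h, E.ρ_lact]

theorem σ_aL (haL : E.IsTotalLAct aL) {γ : G} {z : Z} (h : 𝒢.s γ = E.ρ z) :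
    E.σ (aL γ z) = E.σ z := by
  rw [haL γ z h, E.σ_lact]

theorem ρ_aR (haR : E.IsTotalRAct aR) {z : Z} {η : H} (h : E.σ z = ℋ.r η) :
    E.ρ (aR z η) = E.ρ z := by
  rw [haR z η h, E.ρ_ract]

theorem σ_aR (haR : E.IsTotalRAct aR) {z : Z} {η : H} (h : E.σ z = ℋ.r η) :
    E.σ (aR z η) = ℋ.s η := by
  rw [haR z η h, E.σ_ract]

theorem aL_aL_inv (haL : E.IsTotalLAct aL) {γ : G} {z : Z} (h : 𝒢.r γ = E.ρ z) :
    aL γ (aL (𝒢.inv γ) z) = z := by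
  have h₁ : 𝒢.s (𝒢.inv γ) = E.ρ z := (𝒢.s_inv γ).trans h
  have h₂ : 𝒢.s γ = 𝒢.r (𝒢.inv γ) := (𝒢.r_inv γ).symm
  have h₃ : 𝒢.s γ = E.ρ (E.lact (𝒢.inv γ) z h₁) := by rw [E.ρ_lact, 𝒢.r_inv]
  have h₄ : 𝒢.s (𝒢.mul γ (𝒢.inv γ) h₂) = E.ρ z := by rw [𝒢.s_mul]; exact h₁
  have hunit : 𝒢.mul γ (𝒢.inv γ) h₂ = E.ρ z := (𝒢.mul_inv γ h₂).trans h
  rw [haL _ z h₁, haL γ _ h₃, ← E.lact_mul γ (𝒢.inv γ) z h₂ h₁ h₄ h₃]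
  -- `γ γ⁻¹ = ρ z` holds only propositionally and the action depends on a proof about it,
  -- so the unit law is applied after generalizing the arrow.
  have lact_unit' : ∀ u (hu : u = E.ρ z) (h : 𝒢.s u = E.ρ z), E.lact u z h = z := by
    rintro _ rfl h
    exact E.lact_unit z h
  exact lact_unit' _ hunit h₄

theorem aR_aR_inv (haR : E.IsTotalRAct aR) {z : Z} {η : H} (h : ℋ.r η = E.σ z) :
    aR (aR z η) (ℋ.inv η) = z := by
  have h₁ : E.σ z = ℋ.r η := h.symm
  have h₂ : ℋ.s η = ℋ.r (ℋ.inv η) := (ℋ.r_inv η).symm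
  have h₃ : E.σ (E.ract z η h₁) = ℋ.r (ℋ.inv η) := by rw [E.σ_ract, ℋ.r_inv]
  have h₄ : E.σ z = ℋ.r (ℋ.mul η (ℋ.inv η) h₂) := by rw [ℋ.r_mul]; exact h₁
  have hunit : ℋ.mul η (ℋ.inv η) h₂ = E.σ z := (ℋ.mul_inv η h₂).trans h
  rw [haR z η h₁, haR _ _ h₃, ← E.ract_mul z η (ℋ.inv η) h₁ h₂ h₄ h₃]
  have ract_unit' : ∀ v (hv : v = E.σ z) (h : E.σ z = ℋ.r v), E.ract z v h = z := by
    rintro _ rfl h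
    exact E.ract_unit z h
  exact ract_unit' _ hunit h₄

theorem aR_aL_comm (haL : E.IsTotalLAct aL) (haR : E.IsTotalRAct aR) {γ : G} {z : Z} {η : H}
    (h₁ : 𝒢.s γ = E.ρ z) (h₂ : E.σ z = ℋ.r η) : aR (aL γ z) η = aL γ (aR z η) := by
  have h₃ : E.σ (E.lact γ z h₁) = ℋ.r η := by rw [E.σ_lact]; exact h₂
  have h₄ : 𝒢.s γ = E.ρ (E.ract z η h₂) := by rw [E.ρ_ract]; exact h₁
  rw [haL γ z h₁, haR _ η h₃, haR z η h₂, haL γ _ h₄]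
  exact E.act_comm γ z η h₁ h₂ h₃ h₄

theorem continuousOn_aL (haL : E.IsTotalLAct aL) {X : Type*} [TopologicalSpace X]
    {f : X → G} {g : X → Z} {S : Set X} (hf : ContinuousOn f S) (hg : ContinuousOn g S)
    (h : ∀ x ∈ S, 𝒢.s (f x) = E.ρ (g x)) : ContinuousOn (fun x => aL (f x) (g x)) S := by
  rw [continuousOn_iff_continuous_domRestrict] at hf hg ⊢
  have hrestrict : S.domRestrict (fun x => aL (f x) (g x)) =
      (fun p : {p : G × Z // 𝒢.s p.1 = E.ρ p.2} => E.lact p.1.1 p.1.2 p.2) ∘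
        fun x : S => ⟨(f x, g x), h x x.2⟩ :=
    funext fun x => haL _ _ _
  rw [hrestrict]
  exact E.lact_cont.comp ((hf.prodMk hg).subtype_mk _)

theorem continuousOn_aR (haR : E.IsTotalRAct aR) {X : Type*} [TopologicalSpace X]
    {f : X → Z} {g : X → H} {S : Set X} (hf : ContinuousOn f S) (hg : ContinuousOn g S)
    (h : ∀ x ∈ S, E.σ (f x) = ℋ.r (g x)) : ContinuousOn (fun x => aR (f x) (g x)) S := by
  rw [continuousOn_iff_continuous_domRestrict] at hf hg ⊢
  have hrestrict : S.domRestrict (fun x => aR (f x) (g x)) =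
      (fun p : {p : Z × H // E.σ p.1 = ℋ.r p.2} => E.ract p.1.1 p.1.2 p.2) ∘
        fun x : S => ⟨(f x, g x), h x x.2⟩ :=
    funext fun x => haR _ _ _
  rw [hrestrict]
  exact E.ract_cont.comp ((hf.prodMk hg).subtype_mk _)

end GpdEquiv

section Imprimitivity

variable {G H Z : Type*} [TopologicalSpace G] [TopologicalSpace H] [TopologicalSpace Z]
  {𝒢 : TopGpd G} {ℋ : TopGpd H} {E : GpdEquiv 𝒢 ℋ Z} {aL : G → Z → Z} {aR : Z → H → Z}

def imprimitivityIntegrand (𝒢 : TopGpd G) (aL : G → Z → Z) (aR : Z → H → Z)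
    (φ ψ χ : Z → ℂ) (z : Z) (γ : G) (η : H) : ℂ :=
  φ (aR z η) * starRingEnd ℂ (ψ (aL (𝒢.inv γ) (aR z η))) * χ (aL (𝒢.inv γ) z)

theorem imprimitivityIntegrand_eq_left_integrand (haL : E.IsTotalLAct aL) (haR : E.IsTotalRAct aR)
    (φ ψ χ : Z → ℂ) {z : Z} {γ : G} {η : H} (hγ : 𝒢.r γ = E.ρ z) (hη : ℋ.r η = E.σ z) :
    imprimitivityIntegrand 𝒢 aL aR φ ψ χ z γ η =
      φ (aR z η) * starRingEnd ℂ (ψ (aR (aL (𝒢.inv γ) z) η)) * χ (aL (𝒢.inv γ) z) := by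
  rw [GpdEquiv.aR_aL_comm haL haR ((𝒢.s_inv γ).trans hγ) hη.symm, imprimitivityIntegrand]

theorem imprimitivityIntegrand_eq_right_integrand (haL : E.IsTotalLAct aL) (haR : E.IsTotalRAct aR)
    (φ ψ χ : Z → ℂ) {z : Z} {γ : G} {η : H} (hγ : 𝒢.r γ = E.ρ z) (hη : ℋ.r η = E.σ z) :
    imprimitivityIntegrand 𝒢 aL aR φ ψ χ z γ η =
      φ (aR z η) * (starRingEnd ℂ (ψ (aL (𝒢.inv γ) (aR z η))) *
        χ (aR (aL (𝒢.inv γ) (aR z η)) (ℋ.inv η))) := by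
  have hs : 𝒢.s (𝒢.inv γ) = E.ρ (aR z η) := by
    rw [GpdEquiv.ρ_aR haR hη.symm, 𝒢.s_inv, hγ]
  rw [GpdEquiv.aR_aL_comm haL haR hs ((GpdEquiv.σ_aR haR hη.symm).trans (ℋ.r_inv η).symm),
    GpdEquiv.aR_aR_inv haR hη, imprimitivityIntegrand, mul_assoc]

theorem continuousOn_imprimitivityIntegrand (haL : E.IsTotalLAct aL) (haR : E.IsTotalRAct aR)
    {φ ψ χ : Z → ℂ} (hφ : Continuous φ) (hψ : Continuous ψ) (hχ : Continuous χ) (z : Z) :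
    ContinuousOn (Function.uncurry (imprimitivityIntegrand 𝒢 aL aR φ ψ χ z))
      ({γ | 𝒢.r γ = E.ρ z} ×ˢ {η | ℋ.r η = E.σ z}) := by
  set S := {γ | 𝒢.r γ = E.ρ z} ×ˢ {η | ℋ.r η = E.σ z}
  have hγinv : ContinuousOn (fun p : G × H => 𝒢.inv p.1) S :=
    (𝒢.cont_inv.comp continuous_fst).continuousOn
  have hz_η : ContinuousOn (fun p : G × H => aR z p.2) S :=
    GpdEquiv.continuousOn_aR haR continuousOn_const continuous_snd.continuousOn
      fun p hp => hp.2.symm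
  have hγinv_z_η : ContinuousOn (fun p : G × H => aL (𝒢.inv p.1) (aR z p.2)) S :=
    GpdEquiv.continuousOn_aL haL hγinv hz_η fun p hp => by
      rw [GpdEquiv.ρ_aR haR hp.2.symm, 𝒢.s_inv]
      exact hp.1
  have hγinv_z : ContinuousOn (fun p : G × H => aL (𝒢.inv p.1) z) S :=
    GpdEquiv.continuousOn_aL haL hγinv continuousOn_const fun p hp => (𝒢.s_inv p.1).trans hp.1
  exact ((hφ.comp_continuousOn hz_η).mul
    ((Complex.continuous_conj.comp hψ).comp_continuousOn hγinv_z_η)).mul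
      (hχ.comp_continuousOn hγinv_z)

theorem mem_of_imprimitivityIntegrand_ne_zero (haL : E.IsTotalLAct aL) (haR : E.IsTotalRAct aR)
    {φ ψ χ : Z → ℂ} {z : Z} {γ : G} {η : H} (hγ : 𝒢.r γ = E.ρ z) (hη : ℋ.r η = E.σ z)
    (hne : imprimitivityIntegrand 𝒢 aL aR φ ψ χ z γ η ≠ 0) :
    γ ∈ {γ | ∃ w ∈ tsupport χ, ∃ h : 𝒢.s γ = E.ρ w, E.lact γ w h ∈ ({z} : Set Z)} ∧
      η ∈ {η | ∃ w ∈ ({z} : Set Z), ∃ h : E.σ w = ℋ.r η, E.ract w η h ∈ tsupport φ} := by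
  have hφ : φ (aR z η) ≠ 0 := left_ne_zero_of_mul (left_ne_zero_of_mul hne)
  have hχ : χ (aL (𝒢.inv γ) z) ≠ 0 := right_ne_zero_of_mul hne
  have hs : 𝒢.s γ = E.ρ (aL (𝒢.inv γ) z) :=
    (GpdEquiv.ρ_aL haL ((𝒢.s_inv γ).trans hγ)).trans (𝒢.r_inv γ) |>.symm
  refine ⟨⟨_, subset_tsupport χ hχ, hs, ?_⟩, ⟨z, rfl, hη.symm, ?_⟩⟩
  · rw [← haL, GpdEquiv.aL_aL_inv haL hγ]
    rfl
  · rw [← haR]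
    exact subset_tsupport φ hφ

theorem integrable_imprimitivityIntegrand [T2Space G] [SecondCountableTopology G]
    [MeasurableSpace G] [BorelSpace G] [T2Space H] [SecondCountableTopology H]
    [MeasurableSpace H] [BorelSpace H] (haL : E.IsTotalLAct aL) (haR : E.IsTotalRAct aR)
    {φ ψ χ : Z → ℂ} (hφ : Continuous φ) (hφs : HasCompactSupport φ) (hψ : Continuous ψ)
    (hχ : Continuous χ) (hχs : HasCompactSupport χ) {z : Z}
    {μ : Measure G} [IsFiniteMeasureOnCompacts μ] (hμ : ∀ᵐ γ ∂μ, 𝒢.r γ = E.ρ z)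
    {ν : Measure H} [IsFiniteMeasureOnCompacts ν] [SFinite ν] (hν : ∀ᵐ η ∂ν, ℋ.r η = E.σ z) :
    Integrable (Function.uncurry (imprimitivityIntegrand 𝒢 aL aR φ ψ χ z)) (μ.prod ν) := by
  refine integrable_of_continuousOn_of_ae_mem
    ((isClosed_eq 𝒢.cont_r continuous_const).prod (isClosed_eq ℋ.cont_r continuous_const))
    ((Measure.quasiMeasurePreserving_fst.ae hμ).and (Measure.quasiMeasurePreserving_snd.ae hν))
    ((E.isCompact_setOf_lact_mem (isCompact_singleton (x := z)) hχs).prod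
      (E.isCompact_setOf_ract_mem hφs (isCompact_singleton (x := z))))
    (continuousOn_imprimitivityIntegrand haL haR hφ hψ hχ z) ?_
  rintro ⟨γ, η⟩ ⟨hγ, hη⟩ hne
  exact mem_of_imprimitivityIntegrand_ne_zero haL haR hγ hη hne

end Imprimitivity

theorem imprimitivity_condition_general {G H Z : Type*}
    [TopologicalSpace G] [LocallyCompactSpace G] [T2Space G] [SecondCountableTopology G]
    [MeasurableSpace G] [BorelSpace G]
    [TopologicalSpace H] [LocallyCompactSpace H] [T2Space H] [SecondCountableTopology H]
    [MeasurableSpace H] [BorelSpace H]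
    [TopologicalSpace Z]
    (𝒢 : TopGpd G) (ℋ : TopGpd H) (E : GpdEquiv 𝒢 ℋ Z)
    -- Haar system on `G`
    (lamG : G → Measure G) (hlamreg : ∀ u, (lamG u).Regular)
    (hlamsupp : ∀ u, 𝒢.r u = u → lamG u {γ | 𝒢.r γ ≠ u} = 0)
    -- Haar system on `H`
    (βH : H → Measure H) (hβreg : ∀ v, (βH v).Regular)
    (hβsupp : ∀ v, ℋ.r v = v → βH v {η | ℋ.r η ≠ v} = 0)
    -- total versions of the actions on `Z`
    (aL : G → Z → Z) (haL : ∀ γ z (h : 𝒢.s γ = E.ρ z), aL γ z = E.lact γ z h)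
    (aR : Z → H → Z) (haR : ∀ z η (h : E.σ z = ℋ.r η), aR z η = E.ract z η h)
    -- the functions
    (φ ψ χ : Z → ℂ) (hφ : Continuous φ) (hφs : HasCompactSupport φ)
    (hψ : Continuous ψ)
    (hχ : Continuous χ) (hχs : HasCompactSupport χ)
    -- the inner products `⟨φ,ψ⟩_G ∈ C_c(G)` and `⟨ψ,χ⟩_H ∈ C_c(H)`
    (ipG : G → ℂ)
    (hipG : ∀ γ w, E.ρ w = 𝒢.s γ →
      ipG γ = ∫ η, φ (aR (aL γ w) η) * (starRingEnd ℂ) (ψ (aR w η)) ∂(βH (E.σ w)))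
    (ipH : H → ℂ)
    (hipH : ∀ η z, E.σ z = ℋ.r η →
      ipH η = ∫ γ, (starRingEnd ℂ) (ψ (aL (𝒢.inv γ) z)) *
        χ (aR (aL (𝒢.inv γ) z) η) ∂(lamG (E.ρ z))) :
    ∀ z : Z,
      ∫ γ, ipG γ * χ (aL (𝒢.inv γ) z) ∂(lamG (E.ρ z)) =
      ∫ η, φ (aR z η) * ipH (ℋ.inv η) ∂(βH (E.σ z)) := by
  intro z
  have hC : ∀ᵐ γ ∂lamG (E.ρ z), 𝒢.r γ = E.ρ z := ae_iff.mpr (hlamsupp _ (E.ρ_unit z))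
  have hD : ∀ᵐ η ∂βH (E.σ z), ℋ.r η = E.σ z := ae_iff.mpr (hβsupp _ (E.σ_unit z))
  have hL : ∫ γ, ipG γ * χ (aL (𝒢.inv γ) z) ∂lamG (E.ρ z) =
      ∫ γ, ∫ η, imprimitivityIntegrand 𝒢 aL aR φ ψ χ z γ η ∂βH (E.σ z) ∂lamG (E.ρ z) := by
    refine integral_congr_ae ?_
    filter_upwards [hC] with γ hγ
    have hs : 𝒢.s (𝒢.inv γ) = E.ρ z := (𝒢.s_inv γ).trans hγ
    rw [hipG γ _ ((GpdEquiv.ρ_aL haL hs).trans (𝒢.r_inv γ)), GpdEquiv.σ_aL haL hs,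
      ← integral_mul_const]
    refine integral_congr_ae ?_
    filter_upwards [hD] with η hη
    rw [GpdEquiv.aL_aL_inv haL hγ, imprimitivityIntegrand_eq_left_integrand haL haR φ ψ χ hγ hη]
  have hR : ∫ η, φ (aR z η) * ipH (ℋ.inv η) ∂βH (E.σ z) =
      ∫ η, ∫ γ, imprimitivityIntegrand 𝒢 aL aR φ ψ χ z γ η ∂lamG (E.ρ z) ∂βH (E.σ z) := by
    refine integral_congr_ae ?_
    filter_upwards [hD] with η hη
    rw [hipH _ _ ((GpdEquiv.σ_aR haR hη.symm).trans (ℋ.r_inv η).symm),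
      GpdEquiv.ρ_aR haR hη.symm, ← integral_const_mul]
    refine integral_congr_ae ?_
    filter_upwards [hC] with γ hγ
    rw [imprimitivityIntegrand_eq_right_integrand haL haR φ ψ χ hγ hη]
  have := hlamreg (E.ρ z)
  have := hβreg (E.σ z)
  rw [hL, hR, integral_integral_swap
    (integrable_imprimitivityIntegrand haL haR hφ hφs hψ hχ hχs hC hD)]

/-- the imprimitivity (compatibility) condition
`⟨φ,ψ⟩_G · χ = φ · ⟨ψ,χ⟩_H` for `φ, ψ, χ ∈ C_c(Z)`. -/
theorem imprimitivity_condition {G H Z : Type*}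
    [TopologicalSpace G] [LocallyCompactSpace G] [T2Space G] [SecondCountableTopology G]
    [MeasurableSpace G] [BorelSpace G]
    [TopologicalSpace H] [LocallyCompactSpace H] [T2Space H] [SecondCountableTopology H]
    [MeasurableSpace H] [BorelSpace H]
    [TopologicalSpace Z] [LocallyCompactSpace Z] [T2Space Z] [SecondCountableTopology Z]
    (𝒢 : TopGpd G) (ℋ : TopGpd H) (E : GpdEquiv 𝒢 ℋ Z)
    -- Haar system on `G`
    (lamG : G → Measure G) (hlamreg : ∀ u, (lamG u).Regular)
    (hlamsupp : ∀ u, 𝒢.r u = u → lamG u {γ | 𝒢.r γ ≠ u} = 0)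
    (mG : G → G → G) (hmG : ∀ x y (h : 𝒢.s x = 𝒢.r y), mG x y = 𝒢.mul x y h)
    (hlaminv : ∀ γ (f : G → ℂ), Continuous f → HasCompactSupport f →
      ∫ x, f (mG γ x) ∂(lamG (𝒢.s γ)) = ∫ x, f x ∂(lamG (𝒢.r γ)))
    -- Haar system on `H`
    (βH : H → Measure H) (hβreg : ∀ v, (βH v).Regular)
    (hβsupp : ∀ v, ℋ.r v = v → βH v {η | ℋ.r η ≠ v} = 0)
    (mH : H → H → H) (hmH : ∀ x y (h : ℋ.s x = ℋ.r y), mH x y = ℋ.mul x y h)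
    (hβinv : ∀ η (f : H → ℂ), Continuous f → HasCompactSupport f →
      ∫ x, f (mH η x) ∂(βH (ℋ.s η)) = ∫ x, f x ∂(βH (ℋ.r η)))
    -- total versions of the actions on `Z`
    (aL : G → Z → Z) (haL : ∀ γ z (h : 𝒢.s γ = E.ρ z), aL γ z = E.lact γ z h)
    (aR : Z → H → Z) (haR : ∀ z η (h : E.σ z = ℋ.r η), aR z η = E.ract z η h)
    -- the functions
    (φ ψ χ : Z → ℂ) (hφ : Continuous φ) (hφs : HasCompactSupport φ)
    (hψ : Continuous ψ) (hψs : HasCompactSupport ψ)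
    (hχ : Continuous χ) (hχs : HasCompactSupport χ)
    -- the inner products `⟨φ,ψ⟩_G ∈ C_c(G)` and `⟨ψ,χ⟩_H ∈ C_c(H)`
    (ipG : G → ℂ)
    (hipG : ∀ γ w, E.ρ w = 𝒢.s γ →
      ipG γ = ∫ η, φ (aR (aL γ w) η) * (starRingEnd ℂ) (ψ (aR w η)) ∂(βH (E.σ w)))
    (ipH : H → ℂ)
    (hipH : ∀ η z, E.σ z = ℋ.r η →
      ipH η = ∫ γ, (starRingEnd ℂ) (ψ (aL (𝒢.inv γ) z)) *
        χ (aR (aL (𝒢.inv γ) z) η) ∂(lamG (E.ρ z))) :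
    ∀ z : Z,
      ∫ γ, ipG γ * χ (aL (𝒢.inv γ) z) ∂(lamG (E.ρ z)) =
      ∫ η, φ (aR z η) * ipH (ℋ.inv η) ∂(βH (E.σ z)) :=
  imprimitivity_condition_general 𝒢 ℋ E lamG hlamreg hlamsupp βH hβreg hβsupp aL haL aR haR φ ψ χ hφ
    hφs hψ hχ hχs ipG hipG ipH hipH
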